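/- Let d ≥ 3 be odd and a > 0, and define ∇̂f⁽²⁾ : ℝ^d → ℝ^d by ∇̂f⁽²⁾(x) = a∑_{j=1}^{(d−1)/2} ∇̂h_{2j}(x). Then for every j ∈ {0,…,(d−1)/2} and every x ∈ K_{2j+1}, one has ∇̂f⁽²⁾(x) ∈ K_{2j+1}. -/

import Mathlib

open scoped BigOperators RealInnerProductSpace Classical

noncomputable section

/-- The `k`-th standard basis vector of `ℝ^d`, `0`-indexed (so the paper's `e_k` is
`stdBasis d (k-1)`); out-of-range indices give `0`. -/
def stdBasis (d j : ℕ) : EuclideanSpace ℝ (Fin d) :=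
  if h : j < d then EuclideanSpace.single ⟨j, h⟩ 1 else 0

/-- The subgradient oracle `∇̂h_j` (paper's `1`-indexed `j`, so `e_{j+1} = stdBasis d j`
and `e_j = stdBasis d (j-1)`). -/
def gradh (d j : ℕ) (x : EuclideanSpace ℝ (Fin d)) : EuclideanSpace ℝ (Fin d) :=
  if ⟪stdBasis d (j - 1), x⟫ < ⟪stdBasis d j, x⟫ then stdBasis d j - stdBasis d (j - 1)
  else if ⟪stdBasis d j, x⟫ < ⟪stdBasis d (j - 1), x⟫ then stdBasis d (j - 1) - stdBasis d j
  else 0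

/-- `K_j = span{e_1, …, e_j}`. -/
def Ksub (d j : ℕ) : Submodule ℝ (EuclideanSpace ℝ (Fin d)) :=
  Submodule.span ℝ {v | ∃ i < j, v = stdBasis d i}

lemma inner_stdBasis_eq_zero_of_mem_Ksub {d m k : ℕ} {x : EuclideanSpace ℝ (Fin d)}
    (hx : x ∈ Ksub d m) (hk : m ≤ k) : ⟪stdBasis d k, x⟫ = 0 := by
  induction hx using Submodule.span_induction with
  | mem v hv =>
    obtain ⟨i, hi, rfl⟩ := hv
    unfold stdBasis
    split_ifs with hk' hi'
    · rw [EuclideanSpace.inner_single_left, PiLp.single_apply,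
        if_neg (by simp only [Fin.mk.injEq]; omega)]
      simp
    all_goals simp
  | zero => simp
  | add u v _ _ hu hv => rw [inner_add_right, hu, hv, add_zero]
  | smul c u _ hu => rw [real_inner_smul_right, hu, mul_zero]

lemma stdBasis_mem_Ksub {d m k : ℕ} (h : k < m) : stdBasis d k ∈ Ksub d m :=
  Submodule.subset_span ⟨k, h, rfl⟩

lemma gradh_mem_Ksub_of_lt {d j m : ℕ} (hj : j < m) (x : EuclideanSpace ℝ (Fin d)) :
    gradh d j x ∈ Ksub d m := by
  have hej : stdBasis d j ∈ Ksub d m := stdBasis_mem_Ksub hj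
  have hej' : stdBasis d (j - 1) ∈ Ksub d m := stdBasis_mem_Ksub (by omega)
  unfold gradh
  split_ifs
  · exact Submodule.sub_mem _ hej hej'
  · exact Submodule.sub_mem _ hej' hej
  · exact Submodule.zero_mem _

lemma gradh_eq_zero_of_mem_Ksub {d j m : ℕ} {x : EuclideanSpace ℝ (Fin d)}
    (hx : x ∈ Ksub d m) (hj : m < j) : gradh d j x = 0 := by
  have hxj : ⟪stdBasis d j, x⟫ = 0 := inner_stdBasis_eq_zero_of_mem_Ksub hx hj.le
  have hxj' : ⟪stdBasis d (j - 1), x⟫ = 0 := inner_stdBasis_eq_zero_of_mem_Ksub hx (by omega)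
  simp [gradh, hxj, hxj']

-- `j ≠ m` is essential: `∇̂h_m` can move a point of `K_m` along `e_{m+1} - e_m`.
lemma gradh_mem_Ksub {d j m : ℕ} (hjm : j ≠ m) {x : EuclideanSpace ℝ (Fin d)}
    (hx : x ∈ Ksub d m) : gradh d j x ∈ Ksub d m := by
  rcases lt_or_gt_of_ne hjm with hlt | hgt
  · exact gradh_mem_Ksub_of_lt hlt x
  · rw [gradh_eq_zero_of_mem_Ksub hx hgt]
    exact Submodule.zero_mem _

theorem stmt8_general (d : ℕ) (a : ℝ)
    (gf : EuclideanSpace ℝ (Fin d) → EuclideanSpace ℝ (Fin d))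
    (hgf : ∀ x, gf x =
      a • ∑ j ∈ Finset.Icc 1 ((d - 1) / 2), gradh d (2 * j) x) :
    ∀ j ∈ Finset.range ((d - 1) / 2 + 1), ∀ x ∈ Ksub d (2 * j + 1), gf x ∈ Ksub d (2 * j + 1) := by
  intro j _ x hx
  rw [hgf]
  exact Submodule.smul_mem _ _ <|
    Submodule.sum_mem _ fun i _ => gradh_mem_Ksub (by omega) hx

theorem stmt8 (d : ℕ) (hd : 3 ≤ d) (hodd : d % 2 = 1) (a : ℝ) (ha : 0 < a)
    (gf : EuclideanSpace ℝ (Fin d) → EuclideanSpace ℝ (Fin d))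
    (hgf : ∀ x, gf x =
      a • ∑ j ∈ Finset.Icc 1 ((d - 1) / 2), gradh d (2 * j) x) :
    ∀ j ∈ Finset.range ((d - 1) / 2 + 1), ∀ x ∈ Ksub d (2 * j + 1), gf x ∈ Ksub d (2 * j + 1) :=
  stmt8_general d a gf hgf

end
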